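/- Let q be an odd prime and k ≥ 2. Then for no n does there exist a k-dimensional ZMod q-subspace C of (Fin n → ZMod q) satisfying both |w_L(C)| = (q^k − 1)/2 (Lee-MWS) and w_L(C) = {1, 2, …, n·(q−1)/2} (Lee-FWS). -/

import Mathlib

/-- The Lee weight of an element of `ZMod q`. -/
def leeWt {q : ℕ} (α : ZMod q) : ℕ := min α.val (q - α.val)

/-- The Lee weight of a vector. -/
def leeW {q n : ℕ} (c : Fin n → ZMod q) : ℕ := ∑ i, leeWt (c i)

/-- The Lee weight set of a set of vectors. -/
def leeSet {q n : ℕ} (C : Set (Fin n → ZMod q)) : Set ℕ :=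
  {x | ∃ c ∈ C, c ≠ 0 ∧ leeW c = x}

/-!
Write `q = 2m + 1` and `N = n m`, the largest possible Lee weight. If `C` is Lee-FWS and
Lee-MWS, its `q^k - 1 = 2N` nonzero codewords realise each weight `1, …, N`, and `c ≠ -c` have
equal weights, so every weight occurs exactly twice and the weights of `C` add up to `N (N + 1)`.
A codeword of weight `N` has no zero coordinate, so every coordinate projection maps `C` onto
`ZMod q` with fibres of size `q^(k-1)`; summing coordinatewise, the weights also add up to
`n q^(k-1) m (m + 1)`. Comparing the two sums gives `N = m`, i.e. `q^k = q`, which fails for `k ≥ 2`.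
-/

open Finset

section LeeWeight

variable {q n : ℕ}

@[simp]
lemma leeWt_zero : leeWt (0 : ZMod q) = 0 := by
  simp [leeWt]

@[simp]
lemma leeWt_neg (α : ZMod q) : leeWt (-α) = leeWt α := by
  rcases Nat.eq_zero_or_pos q with rfl | hq
  · simp [leeWt]
  have : NeZero q := ⟨hq.ne'⟩
  rcases eq_or_ne α 0 with rfl | h
  · simp
  · have := ZMod.val_lt α
    simp only [leeWt, ZMod.neg_val, if_neg h]
    omega

lemma leeWt_le_half (α : ZMod q) : leeWt α ≤ q / 2 := by
  unfold leeWt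
  omega

@[simp]
lemma leeW_zero : leeW (0 : Fin n → ZMod q) = 0 := by
  simp [leeW]

@[simp]
lemma leeW_neg (c : Fin n → ZMod q) : leeW (-c) = leeW c := by
  simp [leeW]

lemma apply_ne_zero_of_leeW_eq (hq : 2 ≤ q) {c : Fin n → ZMod q} (hc : leeW c = n * (q / 2))
    (i : Fin n) : c i ≠ 0 := by
  intro hi
  have : leeW c < ∑ _j : Fin n, q / 2 :=
    sum_lt_sum (fun j _ => leeWt_le_half (c j)) ⟨i, mem_univ i, by rw [hi, leeWt_zero]; omega⟩
  simp only [sum_const, card_univ, Fintype.card_fin, smul_eq_mul] at this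
  omega

end LeeWeight

lemma sum_range_min_sub (m : ℕ) :
    ∑ a ∈ range (2 * m + 1), min a (2 * m + 1 - a) = m * (m + 1) := by
  have hsplit := sum_range_add (fun a => min a (2 * m + 1 - a)) (m + 1) m
  rw [show m + 1 + m = 2 * m + 1 by ring] at hsplit
  have hlow : ∑ a ∈ range (m + 1), min a (2 * m + 1 - a) = ∑ a ∈ range (m + 1), a :=
    sum_congr rfl fun a ha => by simp only [mem_range] at ha; omega
  have hhigh : ∑ x ∈ range m, min (m + 1 + x) (2 * m + 1 - (m + 1 + x)) =
      ∑ x ∈ range m, (m - 1 - x + 1) :=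
    sum_congr rfl fun x hx => by simp only [mem_range] at hx; omega
  rw [hsplit, hlow, hhigh, sum_range_reflect (· + 1) m]
  have hgauss := sum_range_id_mul_two (m + 1)
  have hshift := sum_range_succ' (fun a => a) m
  simp only [add_tsub_cancel_right, add_zero] at hgauss hshift
  linarith

lemma sum_leeWt (m : ℕ) : ∑ α : ZMod (2 * m + 1), leeWt α = m * (m + 1) :=
  (Fin.sum_univ_eq_sum_range (fun a => min a (2 * m + 1 - a)) _).trans (sum_range_min_sub m)

lemma sum_Icc_id_mul_two (N : ℕ) : (∑ i ∈ Icc 1 N, i) * 2 = N * (N + 1) := by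
  induction N with
  | zero => simp
  | succ N ih =>
    rw [sum_Icc_succ_top (by omega), add_mul, ih]
    ring

lemma sum_eq_of_image_eq_Icc {α : Type*} {s : Finset α} {f : α → ℕ} {N : ℕ}
    (himage : s.image f = Icc 1 N) (hcard : #s = 2 * N)
    (hpair : ∀ x ∈ s, ∃ y ∈ s, y ≠ x ∧ f y = f x) :
    ∑ x ∈ s, f x = N * (N + 1) := by
  have hmaps : ∀ x ∈ s, f x ∈ Icc 1 N := fun x hx => himage ▸ mem_image_of_mem f hx
  have hfiber_ge : ∀ w ∈ Icc 1 N, 2 ≤ #{x ∈ s | f x = w} := by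
    intro w hw
    obtain ⟨x, hx, rfl⟩ := mem_image.mp (himage ▸ hw)
    obtain ⟨y, hy, hyx, hfy⟩ := hpair x hx
    exact one_lt_card.mpr ⟨y, mem_filter.mpr ⟨hy, hfy⟩, x, mem_filter.mpr ⟨hx, rfl⟩, hyx⟩
  have hfiber : ∀ w ∈ Icc 1 N, #{x ∈ s | f x = w} = 2 := by
    refine fun w hw => ((sum_eq_sum_iff_of_le hfiber_ge).mp ?_ w hw).symm
    rw [← card_eq_sum_card_fiberwise hmaps, hcard, sum_const, Nat.card_Icc, smul_eq_mul]
    omega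
  have hfiber_sum : ∀ w ∈ Icc 1 N, ∑ x ∈ s with f x = w, f x = w * 2 := fun w hw => by
    rw [sum_congr rfl fun x hx => (mem_filter.mp hx).2, sum_const, hfiber w hw, smul_eq_mul,
      mul_comm]
  rw [← sum_fiberwise_of_maps_to hmaps, sum_congr rfl hfiber_sum, ← sum_mul, sum_Icc_id_mul_two]

theorem AddMonoidHom.card_nsmul_sum_comp {G H M : Type*} [AddGroup G] [Fintype G] [AddMonoid H]
    [Fintype H] [DecidableEq H] [AddCommMonoid M] (f : G →+ H) (hf : Function.Surjective f)
    (g : H → M) : Fintype.card H • ∑ x, g (f x) = Fintype.card G • ∑ y, g y := by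
  set c := #{x | f x = 0}
  have hfiber : ∀ y, #{x | f x = y} = c := fun y => card_fiber_eq_of_mem_range f (hf y) (hf 0)
  have hsum : ∑ x, g (f x) = c • ∑ y, g y := by
    rw [sum_comp, image_univ_of_surjective hf, smul_sum]
    simp only [hfiber]
  have hcard : Fintype.card G = Fintype.card H * c := by
    rw [← card_univ, card_eq_sum_card_fiberwise (t := univ) fun x _ => mem_univ (f x)]
    simp only [hfiber, sum_const, card_univ, smul_eq_mul]
  rw [hsum, hcard, smul_smul]

lemma Submodule.surjective_apply_of_exists_ne_zero {K ι : Type*} [Field K]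
    {C : Submodule K (ι → K)} {i : ι} (hi : ∃ c ∈ C, c i ≠ 0) :
    Function.Surjective fun c : C => (c : ι → K) i := by
  obtain ⟨c, hc, hci⟩ := hi
  intro α
  exact ⟨⟨(α * (c i)⁻¹) • c, C.smul_mem _ hc⟩, by simp [hci]⟩

lemma neg_ne_self_of_odd {ι : Type*} {q : ℕ} (hq : Odd q) {c : ι → ZMod q} (hc : c ≠ 0) :
    -c ≠ c := by
  obtain ⟨i, hi⟩ := Function.ne_iff.mp hc
  intro h
  rcases (ZMod.neg_eq_self_iff (c i)).mp (congrFun h i) with h0 | h2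
  · exact hi h0
  · obtain ⟨m, rfl⟩ := hq
    omega

section Code

variable {q n : ℕ} (C : Submodule (ZMod q) (Fin n → ZMod q)) [Fintype C]

lemma coe_leeSet_eq_image :
    leeSet (C : Set (Fin n → ZMod q)) =
      ((univ.erase 0).image fun c : C => leeW (c : Fin n → ZMod q) : Set ℕ) := by
  ext w
  simp only [leeSet, Set.mem_ofPred_eq, coe_image, coe_erase, coe_univ, Set.mem_image,
    Set.mem_sdiff, Set.mem_univ, Set.mem_singleton_iff, true_and, Subtype.exists,
    Submodule.mk_eq_zero, exists_and_left]
  exact exists_congr fun c => by tauto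

lemma sum_leeW_of_leeSet_eq_Icc (hq : Odd q) {N : ℕ}
    (hset : leeSet (C : Set (Fin n → ZMod q)) = Set.Icc 1 N)
    (hcard : Fintype.card C = 2 * N + 1) :
    ∑ c : C, leeW (c : Fin n → ZMod q) = N * (N + 1) := by
  have himage : (univ.erase 0).image (fun c : C => leeW (c : Fin n → ZMod q)) = Icc 1 N :=
    coe_injective (by rw [← coe_leeSet_eq_image, hset, coe_Icc])
  rw [← sum_erase univ (a := 0) (by simp)]
  refine sum_eq_of_image_eq_Icc himage ?_ fun c hc => ⟨-c, ?_, ?_, by simp⟩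
  · rw [card_erase_of_mem (mem_univ 0), card_univ, hcard]
    rfl
  · simpa using hc
  · exact fun h => neg_ne_self_of_odd hq (by simpa using hc) (congrArg Subtype.val h)

lemma card_mul_sum_leeW [Fact q.Prime] (hC : ∀ i, ∃ c ∈ C, c i ≠ 0) :
    q * ∑ c : C, leeW (c : Fin n → ZMod q) = n * Fintype.card C * ∑ α : ZMod q, leeWt α := by
  have hcoord : ∀ i, q * ∑ c : C, leeWt ((c : Fin n → ZMod q) i) =
      Fintype.card C * ∑ α : ZMod q, leeWt α := fun i => by
    simpa [ZMod.card] using ((LinearMap.proj i ∘ₗ C.subtype).toAddMonoidHom.card_nsmul_sum_comp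
      (Submodule.surjective_apply_of_exists_ne_zero (hC i)) leeWt)
  simp only [leeW]
  rw [sum_comm, mul_sum, sum_congr rfl fun i _ => hcoord i, sum_const, card_univ,
    Fintype.card_fin, smul_eq_mul, mul_assoc]

end Code

lemma eq_one_of_weight_sums_eq {n m : ℕ} (hN : 1 ≤ n * m)
    (h : (2 * m + 1) * (n * m * (n * m + 1)) = n * (2 * (n * m) + 1) * (m * (m + 1))) :
    n = 1 := by
  have hcancel : (2 * m + 1) * (n * m + 1) = (2 * (n * m) + 1) * (m + 1) := by
    refine Nat.eq_of_mul_eq_mul_left hN ?_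
    linear_combination h
  have hm : 0 < m := Nat.pos_of_mul_pos_left hN
  exact Nat.eq_of_mul_eq_mul_right hm (by linarith : n * m = 1 * m)

theorem stmt15 (q k : ℕ) (hq : q.Prime) (hodd : Odd q) (hk : 2 ≤ k) :
    ¬ ∃ (n : ℕ) (C : Submodule (ZMod q) (Fin n → ZMod q)),
        Module.finrank (ZMod q) C = k ∧
        (leeSet (C : Set (Fin n → ZMod q))).ncard = (q ^ k - 1) / 2 ∧
        leeSet (C : Set (Fin n → ZMod q)) = Set.Icc 1 (n * ((q - 1) / 2)) := by
  classical
  rintro ⟨n, C, hrank, hMWS, hFWS⟩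
  have : Fact q.Prime := ⟨hq⟩
  obtain ⟨m, rfl⟩ := id hodd
  have hm : 1 ≤ m := by
    have := hq.two_le
    omega
  rw [show (2 * m + 1 - 1) / 2 = m by omega] at hFWS
  have hcardC : Fintype.card C = (2 * m + 1) ^ k := by
    rw [Module.card_eq_pow_finrank (K := ZMod (2 * m + 1)), ZMod.card, hrank]
  have hpow : (2 * m + 1) ^ k = 2 * (n * m) + 1 := by
    rw [hFWS, Set.ncard_Icc_nat] at hMWS
    obtain ⟨t, ht⟩ := hodd.pow (n := k)
    omega
  have hN : 1 ≤ n * m := by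
    have := Nat.one_lt_pow (show k ≠ 0 by omega) (show 1 < 2 * m + 1 by omega)
    omega
  have hfull : ∀ i, ∃ c ∈ C, c i ≠ 0 := by
    obtain ⟨c, hc, -, hw⟩ := hFWS ▸ Set.right_mem_Icc.mpr hN
    exact fun i => ⟨c, hc, apply_ne_zero_of_leeW_eq (by omega) (by rw [hw]; congr 1; omega) i⟩
  have hsum := card_mul_sum_leeW C hfull
  rw [sum_leeW_of_leeSet_eq_Icc C hodd hFWS (hcardC.trans hpow), hcardC, hpow, sum_leeWt] at hsum
  obtain rfl : n = 1 := eq_one_of_weight_sums_eq hN hsum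
  have := Nat.pow_lt_pow_right (show 1 < 2 * m + 1 by omega) (show 1 < k by omega)
  rw [pow_one] at this
  omega
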